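/- arXiv:1604.03878 — 2 statements merged into one kernel-verified Lean document; each statement's English description precedes it below -/
import Mathlib

section
/- Let 𝒩 be a connected plane Euclidean network. Then the locus 𝒩_ℓ admits a shortcut set if and only if diam(CH(𝒩_ℓ)) < diam(𝒩_ℓ). -/
open Set
open scoped ENNReal

noncomputable section

attribute [local instance] Classical.propDecidable

/-- Points of the Euclidean plane. -/
abbrev Pt : Type := EuclideanSpace ℝ (Fin 2)

/-- Intrinsic (geodesic) distance inside a set `X ⊆ ℝ²`: the infimum of the lengths
(total variations) of continuous paths from `p` to `q` whose image lies in `X`. -/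
def idist (X : Set Pt) (p q : Pt) : ℝ≥0∞ :=
  ⨅ (γ : ℝ → Pt) (_ : ContinuousOn γ (Set.Icc 0 1)) (_ : γ '' Set.Icc 0 1 ⊆ X)
    (_ : γ 0 = p) (_ : γ 1 = q), eVariationOn γ (Set.Icc 0 1)

/-- Eccentricity of a point within `X`. -/
def ecc (X : Set Pt) (p : Pt) : ℝ≥0∞ := ⨆ q ∈ X, idist X p q

/-- Intrinsic diameter of `X`. -/
def idiam (X : Set Pt) : ℝ≥0∞ := ⨆ p ∈ X, ecc X p

/-- A plane Euclidean network: a finite set of vertices in the plane together with a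
finite set of straight-line edges (recorded as ordered pairs of distinct vertices, each
edge recorded exactly once), such that two distinct edges meet only in common endpoints. -/
structure PlaneNetwork where
  V : Finset Pt
  Edg : Finset (Pt × Pt)
  ends_mem : ∀ e ∈ Edg, e.1 ∈ V ∧ e.2 ∈ V
  ends_ne : ∀ e ∈ Edg, e.1 ≠ e.2
  no_swap : ∀ e ∈ Edg, (e.2, e.1) ∉ Edg
  vertex_cover : ∀ v ∈ V, ∃ e ∈ Edg, v = e.1 ∨ v = e.2
  plane : ∀ e ∈ Edg, ∀ f ∈ Edg, e ≠ f →
    segment ℝ e.1 e.2 ∩ segment ℝ f.1 f.2 ⊆ ({e.1, e.2} ∩ {f.1, f.2} : Set Pt)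

namespace PlaneNetwork

/-- The locus of a network: the union of all its (closed) edges. -/
def locus (N : PlaneNetwork) : Set Pt := ⋃ e ∈ N.Edg, segment ℝ e.1 e.2

/-- A network is connected when its locus is path-connected. -/
def Connected (N : PlaneNetwork) : Prop := IsPathConnected N.locus

/-- `u` and `v` are joined by an edge of the network. -/
def IsEdge (N : PlaneNetwork) (u v : Pt) : Prop := (u, v) ∈ N.Edg ∨ (v, u) ∈ N.Edg

/-- A vertex is pendant if it is an endpoint of exactly one edge. -/
def IsPendantVertex (N : PlaneNetwork) (v : Pt) : Prop :=
  v ∈ N.V ∧ (N.Edg.filter (fun e => e.1 = v ∨ e.2 = v)).card = 1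

/-- The number of pendant vertices of a network. -/
def pendantCount (N : PlaneNetwork) : ℕ := (N.V.filter fun v => N.IsPendantVertex v).card

end PlaneNetwork

/-- The union of a set with all the segments in a list. -/
def insertSegs (X : Set Pt) (L : List (Pt × Pt)) : Set Pt :=
  X ∪ ⋃ s ∈ L, segment ℝ s.1 s.2

/-- The segments of the list are inserted iteratively: the endpoints of the first one lie
on `X`, and the endpoints of each subsequent segment lie on the union of `X` with the
previously inserted segments. -/
def ValidSegs (X : Set Pt) : List (Pt × Pt) → Prop
  | [] => True
  | s :: rest => s.1 ∈ X ∧ s.2 ∈ X ∧ ValidSegs (X ∪ segment ℝ s.1 s.2) rest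

/-- A shortcut set for `X`: a finite sequence of iteratively inserted segments whose
insertion strictly decreases the intrinsic diameter. -/
def IsShortcutSet (X : Set Pt) (L : List (Pt × Pt)) : Prop :=
  ValidSegs X L ∧ idiam (insertSegs X L) < idiam X

/-- `X` admits a shortcut set. -/
def HasShortcutSet (X : Set Pt) : Prop := ∃ L, IsShortcutSet X L

/-- The shortcut number: the minimum size of a shortcut set. -/
def scn (X : Set Pt) : ℕ :=
  sInf {k | ∃ L : List (Pt × Pt), L.length = k ∧ IsShortcutSet X L}

/-! Euclidean distance never exceeds intrinsic distance, and a set has the same Euclidean diameter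
as its convex hull, so no insertion of segments brings the intrinsic diameter below
`diam (CH 𝒩ℓ)`. Conversely, segments inside the hull can place a finite `η`-net `P` of the hull on
the locus; joining all pairs of points of `P` and tethering every point to a nearby point of `P`
yields intrinsic diameter at most `diam (CH 𝒩ℓ) + 4η`. -/

section IntrinsicDistance

variable {X Y : Set Pt} {p q : Pt}

lemma idist_le_eVariationOn {γ : ℝ → Pt} (hc : ContinuousOn γ (Icc 0 1))
    (him : γ '' Icc 0 1 ⊆ X) (h0 : γ 0 = p) (h1 : γ 1 = q) :
    idist X p q ≤ eVariationOn γ (Icc 0 1) :=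
  iInf_le_of_le γ <| iInf_le_of_le hc <| iInf_le_of_le him <| iInf_le_of_le h0 <| iInf_le _ h1

lemma idist_le_eVariationOn_Icc {γ : ℝ → Pt} {a b : ℝ} (hab : a < b)
    (hc : ContinuousOn γ (Icc a b)) (him : γ '' Icc a b ⊆ X) (ha : γ a = p) (hb : γ b = q) :
    idist X p q ≤ eVariationOn γ (Icc a b) := by
  set φ : ℝ → ℝ := fun t => (b - a) * t + a
  have hφ : φ '' Icc 0 1 = Icc a b := by
    simp only [φ, image_affine_Icc' (sub_pos.2 hab), mul_zero, zero_add, mul_one, sub_add_cancel]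
  have hmono : MonotoneOn φ (Icc 0 1) := fun s _ t _ hst => by
    simp only [φ]; nlinarith
  rw [← hφ, ← eVariationOn.comp_eq_of_monotoneOn γ φ hmono]
  refine idist_le_eVariationOn ?_ (by rwa [image_comp, hφ]) (by simp [φ, ha]) (by simp [φ, hb])
  exact hc.comp (by fun_prop) ((mapsTo_image φ _).mono_right hφ.subset)

lemma edist_le_idist : edist p q ≤ idist X p q :=
  le_iInf fun _ => le_iInf fun _ => le_iInf fun _ => le_iInf fun h0 => le_iInf fun h1 =>
    h0 ▸ h1 ▸ eVariationOn.edist_le _ (left_mem_Icc.2 zero_le_one) (right_mem_Icc.2 zero_le_one)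

lemma idist_anti (h : X ⊆ Y) (p q : Pt) : idist Y p q ≤ idist X p q :=
  le_iInf fun _ => le_iInf fun hc => le_iInf fun him => le_iInf fun h0 => le_iInf fun h1 =>
    idist_le_eVariationOn hc (him.trans h) h0 h1

lemma idist_le_edist_of_segment_subset (h : segment ℝ p q ⊆ X) : idist X p q ≤ edist p q := by
  have hlip : LipschitzWith (nndist p q) (AffineMap.lineMap p q : ℝ → Pt) :=
    LipschitzWith.of_dist_le_mul fun s t => by
      rw [dist_lineMap_lineMap, Real.dist_eq, mul_comm, coe_nndist]
  calc idist X p q ≤ eVariationOn (AffineMap.lineMap p q ∘ id) (Icc 0 1) :=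
        idist_le_eVariationOn (AffineMap.lineMap_continuous.continuousOn)
          ((segment_eq_image_lineMap ℝ p q).symm ▸ h) (by simp) (by simp)
    _ ≤ nndist p q * eVariationOn (id : ℝ → ℝ) (Icc 0 1) :=
        (hlip.lipschitzOnWith (s := univ)).comp_eVariationOn_le (mapsTo_univ _ _)
    _ ≤ edist p q := by
        rw [edist_nndist]; exact mul_le_of_le_one_right (by simp) (by simp)

lemma idist_triangle (X : Set Pt) (p q r : Pt) : idist X p r ≤ idist X p q + idist X q r := by
  simp only [idist, ENNReal.iInf_add, ENNReal.add_iInf]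
  refine le_iInf fun γ₂ => le_iInf fun hc₂ => le_iInf fun him₂ => le_iInf fun h0₂ =>
    le_iInf fun h1₂ => le_iInf fun γ₁ => le_iInf fun hc₁ => le_iInf fun him₁ =>
    le_iInf fun h0₁ => le_iInf fun h1₁ => ?_
  set γ : ℝ → Pt := fun t => if t ≤ 1 then γ₁ t else γ₂ (t - 1)
  have hshift : (fun t : ℝ => t - 1) '' Icc 1 2 = Icc 0 1 := by
    rw [image_sub_const_Icc]; norm_num
  have hmono : MonotoneOn (fun t : ℝ => t - 1) (Icc 1 2) := fun s _ t _ hst => by linarith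
  have hleft : EqOn γ γ₁ (Icc 0 1) := fun t ht => if_pos ht.2
  have hright : EqOn γ (γ₂ ∘ fun t => t - 1) (Icc 1 2) := fun t ht => by
    rcases ht.1.eq_or_lt with rfl | h
    · simp [γ, h1₁, h0₂]
    · exact if_neg h.not_ge
  have hc₂' : ContinuousOn (γ₂ ∘ fun t => t - 1) (Icc 1 2) :=
    hc₂.comp (by fun_prop) ((mapsTo_image _ _).mono_right hshift.subset)
  have hsplit : Icc (0 : ℝ) 1 ∪ Icc 1 2 = Icc 0 2 := Icc_union_Icc_eq_Icc zero_le_one one_le_two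
  refine (idist_le_eVariationOn_Icc (γ := γ) two_pos ?_ ?_ ?_ ?_).trans_eq ?_
  · rw [← hsplit]
    exact (hc₁.congr hleft).union_of_isClosed (hc₂'.congr hright) isClosed_Icc isClosed_Icc
  · rw [← hsplit, image_union, hleft.image_eq, hright.image_eq, image_comp, hshift]
    exact union_subset him₁ him₂
  · simp [γ, h0₁]
  · norm_num [γ, h1₂]
  · have := eVariationOn.Icc_add_Icc γ (s := univ) zero_le_one one_le_two (mem_univ _)
    simp only [univ_inter] at this
    rw [← this, eVariationOn.eq_of_eqOn hleft, eVariationOn.eq_of_eqOn hright,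
      eVariationOn.comp_eq_of_monotoneOn γ₂ _ hmono, hshift, add_comm]

lemma idist_comm (X : Set Pt) (p q : Pt) : idist X p q = idist X q p := by
  suffices h : ∀ p q, idist X p q ≤ idist X q p from le_antisymm (h p q) (h q p)
  intro p q
  refine le_iInf fun γ => le_iInf fun hc => le_iInf fun him => le_iInf fun h0 =>
    le_iInf fun h1 => ?_
  have hflip : (fun t : ℝ => 1 - t) '' Icc 0 1 = Icc 0 1 := by
    rw [image_const_sub_Icc]; norm_num
  have hanti : AntitoneOn (fun t : ℝ => 1 - t) (Icc 0 1) := fun s _ t _ hst => by linarith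
  have hvar := eVariationOn.comp_eq_of_antitoneOn γ _ hanti
  rw [hflip] at hvar
  rw [← hvar]
  exact idist_le_eVariationOn (hc.comp (by fun_prop) ((mapsTo_image _ _).mono_right hflip.subset))
    (by rwa [image_comp, hflip]) (by simpa using h1) (by simpa using h0)

lemma idist_le_idiam (hp : p ∈ X) (hq : q ∈ X) : idist X p q ≤ idiam X :=
  (le_iSup₂ (f := fun q _ => idist X p q) q hq).trans (le_iSup₂ (f := fun p _ => ecc X p) p hp)

lemma ediam_le_idiam (X : Set Pt) : Metric.ediam X ≤ idiam X :=
  Metric.ediam_le fun _ hp _ hq => edist_le_idist.trans (idist_le_idiam hp hq)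

lemma idiam_le_of_net {P : Set Pt} {r d : ℝ≥0∞} (hnet : ∀ p ∈ X, ∃ x ∈ P, idist X p x ≤ r)
    (hP : ∀ x ∈ P, ∀ y ∈ P, idist X x y ≤ d) : idiam X ≤ r + d + r := by
  refine iSup₂_le fun p hp => iSup₂_le fun q hq => ?_
  obtain ⟨x, hx, hpx⟩ := hnet p hp
  obtain ⟨y, hy, hqy⟩ := hnet q hq
  calc idist X p q ≤ idist X p x + idist X x y + idist X y q :=
        (idist_triangle X p y q).trans (add_le_add_left (idist_triangle X p x y) _)
    _ ≤ r + d + r := by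
        gcongr
        · exact hP x hx y hy
        · rwa [idist_comm]

end IntrinsicDistance

section Insertion

variable {X Y C : Set Pt} {L L₁ L₂ : List (Pt × Pt)}

lemma subset_insertSegs (X : Set Pt) (L : List (Pt × Pt)) : X ⊆ insertSegs X L :=
  subset_union_left

lemma segment_subset_insertSegs {s : Pt × Pt} (hs : s ∈ L) :
    segment ℝ s.1 s.2 ⊆ insertSegs X L :=
  fun _ hx => mem_union_right _ (mem_biUnion hs hx)

lemma insertSegs_subset (hX : X ⊆ C) (hL : ∀ s ∈ L, segment ℝ s.1 s.2 ⊆ C) :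
    insertSegs X L ⊆ C :=
  union_subset hX (iUnion₂_subset hL)

lemma insertSegs_append (X : Set Pt) (L₁ L₂ : List (Pt × Pt)) :
    insertSegs X (L₁ ++ L₂) = insertSegs (insertSegs X L₁) L₂ := by
  ext; simp only [insertSegs, List.mem_append, mem_union, mem_iUnion, exists_prop]; grind

lemma insertSegs_cons (X : Set Pt) (s : Pt × Pt) (L : List (Pt × Pt)) :
    insertSegs X (s :: L) = insertSegs (X ∪ segment ℝ s.1 s.2) L := by
  ext; simp only [insertSegs, List.mem_cons, mem_union, mem_iUnion, exists_prop]; grind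

lemma insertSegs_append_eq_union (X : Set Pt) (L₁ L₂ : List (Pt × Pt)) :
    insertSegs X (L₁ ++ L₂) = insertSegs X L₁ ∪ insertSegs X L₂ := by
  ext; simp only [insertSegs, List.mem_append, mem_union, mem_iUnion, exists_prop]; grind

lemma ValidSegs.mono (hXY : X ⊆ Y) (h : ValidSegs X L) : ValidSegs Y L := by
  induction L generalizing X Y with
  | nil => trivial
  | cons s L ih => exact ⟨hXY h.1, hXY h.2.1, ih (union_subset_union_left _ hXY) h.2.2⟩

lemma ValidSegs.append (h₁ : ValidSegs X L₁) (h₂ : ValidSegs (insertSegs X L₁) L₂) :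
    ValidSegs X (L₁ ++ L₂) := by
  induction L₁ generalizing X with
  | nil => simpa [insertSegs] using h₂
  | cons s L ih =>
    refine ⟨h₁.1, h₁.2.1, ih h₁.2.2 ?_⟩
    rwa [insertSegs_cons] at h₂

lemma validSegs_of_forall_mem (h : ∀ s ∈ L, s.1 ∈ X ∧ s.2 ∈ X) : ValidSegs X L := by
  induction L generalizing X with
  | nil => trivial
  | cons s L ih =>
    refine ⟨(h s List.mem_cons_self).1, (h s List.mem_cons_self).2, ih fun t ht => ?_⟩
    exact (h t (List.mem_cons_of_mem s ht)).imp (mem_union_left _) (mem_union_left _)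

end Insertion

def Attainable (X Q : Set Pt) : Prop :=
  ∃ L, ValidSegs X L ∧ insertSegs X L ⊆ convexHull ℝ X ∧ Q ⊆ insertSegs X L

namespace Attainable

variable {X Q R : Set Pt}

lemma of_subset (h : Q ⊆ X) : Attainable X Q :=
  ⟨[], trivial, by simpa [insertSegs] using subset_convexHull ℝ X, by simpa [insertSegs] using h⟩

lemma mono (h : Attainable X Q) (hRQ : R ⊆ Q) : Attainable X R :=
  let ⟨L, hv, hH, hQ⟩ := h; ⟨L, hv, hH, hRQ.trans hQ⟩

lemma union (hQ : Attainable X Q) (hR : Attainable X R) : Attainable X (Q ∪ R) := by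
  obtain ⟨L₁, hv₁, hH₁, hQ₁⟩ := hQ
  obtain ⟨L₂, hv₂, hH₂, hR₂⟩ := hR
  refine ⟨L₁ ++ L₂, hv₁.append (hv₂.mono (subset_insertSegs X L₁)), ?_, ?_⟩ <;>
    rw [insertSegs_append_eq_union]
  exacts [union_subset hH₁ hH₂, union_subset_union hQ₁ hR₂]

lemma segment {p q : Pt} (h : Attainable X {p, q}) : Attainable X (segment ℝ p q) := by
  obtain ⟨L, hv, hH, hpq⟩ := h
  have hp : p ∈ insertSegs X L := hpq (mem_insert p {q})
  have hq : q ∈ insertSegs X L := hpq (mem_insert_of_mem p rfl)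
  refine ⟨L ++ [(p, q)], hv.append ⟨hp, hq, trivial⟩, ?_, ?_⟩ <;> rw [insertSegs_append]
  · refine insertSegs_subset hH fun s hs => ?_
    rw [List.mem_singleton.1 hs]
    exact (convex_convexHull ℝ X).segment_subset (hH hp) (hH hq)
  · exact segment_subset_insertSegs (s := (p, q)) (List.mem_singleton_self _)

/-- The points that are attainable on their own form a convex set containing `X`. -/
lemma of_mem_convexHull {p : Pt} (hp : p ∈ convexHull ℝ X) : Attainable X {p} := by
  refine convexHull_min (t := {p | Attainable X {p}}) (fun x hx => of_subset (by simpa using hx))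
    (fun x hx y hy a b ha hb hab => ?_) hp
  have hxy : Attainable X {x, y} := by simpa [pair_comm] using union hx hy
  exact hxy.segment.mono (singleton_subset_iff.2 ⟨a, b, ha, hb, hab, rfl⟩)

lemma of_finite (hQ : Q.Finite) (hQX : Q ⊆ convexHull ℝ X) : Attainable X Q := by
  induction Q, hQ using Set.Finite.induction_on with
  | empty => exact of_subset (empty_subset X)
  | @insert a Q _ _ ih =>
    rw [insert_subset_iff] at hQX
    simpa using (of_mem_convexHull hQX.1).union (ih hQX.2)

end Attainable

lemma edist_le_edist_of_mem_segment {E : Type*} [NormedAddCommGroup E] [NormedSpace ℝ E]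
    {a b p : E} (h : p ∈ segment ℝ a b) : edist p b ≤ edist a b := by
  rw [edist_dist, edist_dist]
  exact ENNReal.ofReal_le_ofReal <| by
    linarith [dist_add_dist_of_mem_segment h, dist_nonneg (x := a) (y := p)]

def IsSegmentUnion (X : Set Pt) : Prop :=
  ∃ S : Finset (Pt × Pt), X = ⋃ s ∈ S, segment ℝ s.1 s.2

lemma isSegmentUnion_insertSegs {X : Set Pt} (hX : IsSegmentUnion X) (L : List (Pt × Pt)) :
    IsSegmentUnion (insertSegs X L) := by
  obtain ⟨S, rfl⟩ := hX
  refine ⟨S ∪ L.toFinset, ?_⟩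
  ext
  simp only [insertSegs, Finset.mem_union, List.mem_toFinset, mem_union, mem_iUnion,
    exists_prop]
  grind

namespace IsSegmentUnion

variable {X Y : Set Pt}

lemma isCompact (hX : IsSegmentUnion X) : IsCompact X := by
  obtain ⟨S, rfl⟩ := hX
  refine S.isCompact_biUnion fun s _ => ?_
  rw [segment_eq_image_lineMap]
  exact isCompact_Icc.image AffineMap.lineMap_continuous

/-- A finite net of each segment is also an intrinsic net, since the segment is part of `X`. -/
lemma exists_finset_idist_net (hX : IsSegmentUnion X) {ε : ℝ≥0∞} (hε : 0 < ε) :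
    ∃ Z : Finset Pt, ↑Z ⊆ X ∧ ∀ p ∈ X, ∃ z ∈ Z, idist X p z ≤ ε := by
  obtain ⟨S, rfl⟩ := hX
  have hseg : ∀ s ∈ S, segment ℝ s.1 s.2 ⊆ ⋃ s ∈ S, segment ℝ s.1 s.2 :=
    fun s hs => subset_biUnion_of_mem (u := fun s : Pt × Pt => segment ℝ s.1 s.2) hs
  have hnet : ∀ s ∈ S, ∃ Z : Finset Pt, ↑Z ⊆ segment ℝ s.1 s.2 ∧
      segment ℝ s.1 s.2 ⊆ ⋃ z ∈ Z, Metric.eball z ε := fun s _ => by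
    obtain ⟨Z, hZs, hZ, hcov⟩ := EMetric.totallyBounded_iff'.1
      (IsSegmentUnion.isCompact (X := segment ℝ s.1 s.2) ⟨{s}, by simp⟩).totallyBounded ε hε
    obtain ⟨Z, rfl⟩ := hZ.exists_finset_coe
    exact ⟨Z, hZs, by simpa using hcov⟩
  choose! Z hZs hcov using hnet
  refine ⟨S.biUnion Z, ?_, fun p hp => ?_⟩
  · simpa using fun s hs => (hZs s hs).trans (hseg s hs)
  obtain ⟨s, hs, hps⟩ := mem_iUnion₂.1 hp
  obtain ⟨z, hz, hpz⟩ := mem_iUnion₂.1 (hcov s hs hps)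
  refine ⟨z, Finset.mem_biUnion.2 ⟨s, hs, hz⟩, ?_⟩
  refine (idist_le_edist_of_segment_subset ?_).trans (Metric.mem_eball.1 hpz).le
  exact ((convex_segment _ _).segment_subset hps (hZs s hs hz)).trans (hseg s hs)

/-- Tethering each point of a fine net of `Y` to a nearby point of `P` makes `P` an intrinsic
net. -/
lemma exists_validSegs_idist_net (hY : IsSegmentUnion Y) {P : Finset Pt} (hPY : ↑P ⊆ Y)
    {η : ℝ≥0∞} (hη : 0 < η) (hP : ∀ z ∈ Y, ∃ x ∈ P, edist z x ≤ η) :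
    ∃ L, ValidSegs Y L ∧ ∀ p ∈ insertSegs Y L, ∃ x ∈ P,
      idist (insertSegs Y L) p x ≤ η + η := by
  obtain ⟨Z, hZY, hZ⟩ := hY.exists_finset_idist_net hη
  set T := ((Z ×ˢ P).filter fun s => edist s.1 s.2 ≤ η).toList
  have hT : ∀ s ∈ T, s.1 ∈ Z ∧ s.2 ∈ P ∧ edist s.1 s.2 ≤ η := by
    simp [T, and_assoc]
  have htether : ∀ s ∈ T, ∀ p ∈ segment ℝ s.1 s.2, idist (insertSegs Y T) p s.2 ≤ η :=
    fun s hs p hp => calc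
      _ ≤ edist p s.2 := idist_le_edist_of_segment_subset <|
          ((convex_segment _ _).segment_subset hp (right_mem_segment ℝ _ _)).trans
            (segment_subset_insertSegs hs)
      _ ≤ edist s.1 s.2 := edist_le_edist_of_mem_segment hp
      _ ≤ η := (hT s hs).2.2
  refine ⟨T, validSegs_of_forall_mem fun s hs => ⟨hZY (hT s hs).1, hPY (hT s hs).2.1⟩,
    fun p hp => ?_⟩
  rcases hp with hp | hp
  · obtain ⟨z, hz, hpz⟩ := hZ p hp
    obtain ⟨x, hx, hzx⟩ := hP z (hZY hz)
    have hzxT : (z, x) ∈ T := by simp [T, hz, hx, hzx]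
    refine ⟨x, hx, (idist_triangle _ p z x).trans (add_le_add ?_ ?_)⟩
    · exact (idist_anti (subset_insertSegs Y T) p z).trans hpz
    · exact htether _ hzxT z (left_mem_segment ℝ z x)
  · obtain ⟨s, hs, hps⟩ := mem_iUnion₂.1 hp
    exact ⟨s.2, (hT s hs).2.1, (htether s hs p hps).trans le_add_self⟩

lemma exists_validSegs_idiam_le (hX : IsSegmentUnion X) {ε : ℝ≥0∞} (hε : 0 < ε) :
    ∃ L, ValidSegs X L ∧ idiam (insertSegs X L) ≤ Metric.ediam (convexHull ℝ X) + ε := by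
  set H := convexHull ℝ X
  set η := ε / 2 / 2
  have hη : 0 < η := ENNReal.half_pos (ENNReal.half_pos hε.ne').ne'
  obtain ⟨P, hPH, hPfin, hcov⟩ :=
    EMetric.totallyBounded_iff'.1 hX.isCompact.totallyBounded.convexHull η hη
  obtain ⟨P, rfl⟩ := hPfin.exists_finset_coe
  obtain ⟨L₁, hv₁, hH₁, hP₁⟩ := Attainable.of_finite P.finite_toSet hPH
  set L₂ := (P ×ˢ P).toList
  set Y := insertSegs (insertSegs X L₁) L₂
  have hL₂ : ∀ s ∈ L₂, s.1 ∈ P ∧ s.2 ∈ P := by simp [L₂]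
  have hv₂ : ValidSegs (insertSegs X L₁) L₂ :=
    validSegs_of_forall_mem fun s hs => ⟨hP₁ (hL₂ s hs).1, hP₁ (hL₂ s hs).2⟩
  have hYH : Y ⊆ H := insertSegs_subset hH₁ fun s hs =>
    (convex_convexHull ℝ X).segment_subset (hPH (hL₂ s hs).1) (hPH (hL₂ s hs).2)
  have hcovY : ∀ z ∈ Y, ∃ x ∈ P, edist z x ≤ η := fun z hz => by
    obtain ⟨x, hx, hzx⟩ := mem_iUnion₂.1 (hcov (hYH hz))
    exact ⟨x, hx, (Metric.mem_eball.1 hzx).le⟩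
  obtain ⟨L₃, hv₃, hnet⟩ :=
    (isSegmentUnion_insertSegs (isSegmentUnion_insertSegs hX L₁) L₂).exists_validSegs_idist_net
      (hP₁.trans (subset_insertSegs _ _)) hη hcovY
  refine ⟨L₁ ++ L₂ ++ L₃, (hv₁.append hv₂).append (by rwa [insertSegs_append]), ?_⟩
  rw [insertSegs_append, insertSegs_append]
  refine (idiam_le_of_net (d := Metric.ediam H) hnet fun x hx y hy => ?_).trans_eq ?_
  · calc idist (insertSegs Y L₃) x y ≤ idist Y x y := idist_anti (subset_insertSegs _ _) x y
      _ ≤ edist x y := idist_le_edist_of_segment_subset <|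
          segment_subset_insertSegs (s := (x, y)) (by simpa [L₂] using And.intro hx hy)
      _ ≤ Metric.ediam H := Metric.edist_le_ediam_of_mem (hPH hx) (hPH hy)
  · rw [ENNReal.add_halves, add_right_comm, ENNReal.add_halves, add_comm]

end IsSegmentUnion

theorem stmt2_general (N : PlaneNetwork) :
    HasShortcutSet N.locus ↔
      EMetric.diam (convexHull ℝ N.locus) < idiam N.locus := by
  constructor
  · rintro ⟨L, -, hlt⟩
    calc _ = Metric.ediam N.locus := convexHull_ediam _
      _ ≤ Metric.ediam (insertSegs N.locus L) := Metric.ediam_mono (subset_insertSegs _ _)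
      _ ≤ idiam (insertSegs N.locus L) := ediam_le_idiam _
      _ < idiam N.locus := hlt
  · intro hlt
    obtain ⟨r, hr, hlt⟩ := ENNReal.lt_iff_exists_add_pos_lt.1 hlt
    obtain ⟨L, hv, hle⟩ :=
      IsSegmentUnion.exists_validSegs_idiam_le ⟨N.Edg, rfl⟩ (ENNReal.coe_pos.2 hr)
    exact ⟨L, hv, hle.trans_lt hlt⟩

/-- A connected plane Euclidean network admits a shortcut set iff the
Euclidean diameter of the convex hull of the locus is strictly smaller than the
intrinsic diameter of the locus. -/
theorem stmt2 (N : PlaneNetwork) (hconn : N.Connected) :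
    HasShortcutSet N.locus ↔
      EMetric.diam (convexHull ℝ N.locus) < idiam N.locus :=
  stmt2_general N
end
end

section
/- Let 𝒩 be a plane Euclidean network whose locus is not path-connected, with path-connected components 𝒩_ℓ¹, …, 𝒩_ℓᵏ (k ≥ 2). Then there exists a single closed segment s with both endpoints on 𝒩_ℓ such that 𝒩_ℓ ∪ s is path-connected (i.e., scn(𝒩_ℓ) = 1) if and only if there exists a straight line in ℝ² that intersects every convex hull CH(𝒩_ℓⁱ), 1 ≤ i ≤ k. -/
open Set
open scoped ENNReal

noncomputable section

attribute [local instance] Classical.propDecidable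

/-!
A single segment `[a, b]` that joins the components must meet each of them, because the
components of a network are closed and relatively open in its locus; so the line through `a`
and `b` stabs every convex hull. Conversely, a line that meets the convex hull of a connected
set meets the set itself (a linear functional vanishing on the line's direction maps the set
onto an interval of `ℝ`), so the line meets every component, and the segment between the
extreme meeting points links them all.
-/

open Filter Topology

section Topology

variable {X : Type*} [TopologicalSpace X] {F : Set X}

lemma eventually_mem_pathComponentIn_of_mem
    (hF : ∀ p, ∀ᶠ q in 𝓝 p, q ∈ F → JoinedIn F p q) {p q : X}
    (hq : q ∈ pathComponentIn F p) : ∀ᶠ z in 𝓝 q, z ∈ F → z ∈ pathComponentIn F p :=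
  (hF q).mono fun _ hz hzF => JoinedIn.trans hq (hz hzF)

lemma isClosed_pathComponentIn_of_eventually_joinedIn
    (hF : ∀ p, ∀ᶠ q in 𝓝 p, q ∈ F → JoinedIn F p q) (hFc : IsClosed F) (p : X) :
    IsClosed (pathComponentIn F p) := by
  refine isClosed_of_closure_subset fun z hz => ?_
  have hzF : z ∈ F := hFc.closure_subset (closure_mono pathComponentIn_subset hz)
  obtain ⟨w, hw, hzw⟩ := ((mem_closure_iff_frequently.1 hz).and_eventually (hF z)).exists
  exact JoinedIn.trans hw (hzw (pathComponentIn_subset hw)).symm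

lemma pathComponentIn_inter_nonempty_of_isPreconnected_union
    (hF : ∀ p, ∀ᶠ q in 𝓝 p, q ∈ F → JoinedIn F p q) (hFc : IsClosed F)
    (hnc : ¬IsPathConnected F) {S : Set X} (hSc : IsClosed S) (hpre : IsPreconnected (F ∪ S))
    {p : X} (hp : p ∈ F) : (pathComponentIn F p ∩ S).Nonempty := by
  set A := pathComponentIn F p
  have hFp : ¬F ⊆ A := fun h =>
    hnc <| subset_antisymm h pathComponentIn_subset ▸ isPathConnected_pathComponentIn hp
  by_contra hAS
  rw [not_nonempty_iff_eq_empty, ← disjoint_iff_inter_eq_empty] at hAS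
  set U := interior {z | z ∈ F → z ∈ A}
  have hAU : A ⊆ U := fun q hq =>
    mem_interior_iff_mem_nhds.2 (eventually_mem_pathComponentIn_of_mem hF hq)
  obtain ⟨z, hzF, hzA⟩ := not_subset.1 hFp
  -- `A` is open in `F ∪ S` (it is `(F ∪ S) ∩ (U \ S)`) and closed, yet neither empty nor all of it
  obtain ⟨y, hyFS, ⟨hyU, hyS⟩, hyA⟩ :=
    hpre (U \ S) Aᶜ (isOpen_interior.sdiff hSc)
      (isClosed_pathComponentIn_of_eventually_joinedIn hF hFc p).isOpen_compl
      (fun q _ => (em (q ∈ A)).imp (fun hq => ⟨hAU hq, hAS.notMem_of_mem_left hq⟩) id)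
      ⟨p, .inl hp, hAU (mem_pathComponentIn_self hp), hAS.notMem_of_mem_left
        (mem_pathComponentIn_self hp)⟩
      ⟨z, .inl hzF, hzA⟩
  exact hyA (interior_subset hyU (hyFS.resolve_right hyS))

lemma IsPathConnected.union_iUnion {ι : Type*} {S : Set X} {C : ι → Set X}
    (hS : IsPathConnected S) (hC : ∀ i, IsPathConnected (C i)) (hCS : ∀ i, (C i ∩ S).Nonempty) :
    IsPathConnected (S ∪ ⋃ i, C i) := by
  obtain ⟨a, ha⟩ := hS.nonempty
  refine ⟨a, .inl ha, ?_⟩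
  rintro y (hy | hy)
  · exact (hS.joinedIn a ha y hy).mono subset_union_left
  obtain ⟨i, hy⟩ := mem_iUnion.1 hy
  obtain ⟨z, hzC, hzS⟩ := hCS i
  exact ((hS.joinedIn a ha z hzS).mono subset_union_left).trans
    ((hC i |>.joinedIn z hzC y hy).mono (subset_iUnion C i |>.trans subset_union_right))

end Topology

section Segments

variable {E : Type*} [AddCommGroup E] [Module ℝ E] [TopologicalSpace E] [ContinuousAdd E]
  [ContinuousSMul ℝ E]

lemma isCompact_segment (a b : E) : IsCompact (segment ℝ a b) :=
  Path.range_segment a b ▸ isCompact_range (Path.segment a b).continuous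

lemma eventually_joinedIn_biUnion_segment [T2Space E] {ι : Type*} (s : Finset ι) (a b : ι → E)
    (p : E) : ∀ᶠ q in 𝓝 p, q ∈ ⋃ i ∈ s, segment ℝ (a i) (b i) →
      JoinedIn (⋃ i ∈ s, segment ℝ (a i) (b i)) p q := by
  have hnear : ∀ᶠ q in 𝓝 p, ∀ i ∈ s, q ∈ segment ℝ (a i) (b i) → p ∈ segment ℝ (a i) (b i) := by
    refine (eventually_all_finset s).2 fun i _ => ?_
    by_cases hp : p ∈ segment ℝ (a i) (b i)
    · exact .of_forall fun _ _ => hp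
    · filter_upwards [(isCompact_segment (a i) (b i)).isClosed.isOpen_compl.mem_nhds hp]
        with q hq hq' using absurd hq' hq
  filter_upwards [hnear] with q hq hqs
  obtain ⟨i, hi, hqi⟩ := mem_iUnion₂.1 hqs
  exact JoinedIn.of_segment_subset <| ((convex_segment _ _).segment_subset (hq i hi hqi) hqi).trans
    (subset_biUnion_of_mem (u := fun i => segment ℝ (a i) (b i)) hi)

end Segments

lemma add_smul_mem_segment {E : Type*} [AddCommGroup E] [Module ℝ E] (x v : E) {r s t : ℝ}
    (hrs : r ≤ s) (hst : s ≤ t) : x + s • v ∈ segment ℝ (x + r • v) (x + t • v) := by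
  have hline (u : ℝ) : AffineMap.lineMap x (x + v) u = x + u • v := by
    rw [AffineMap.lineMap_apply_module', add_sub_cancel_left, add_comm]
  rw [← hline, ← hline, ← hline, ← image_segment, segment_eq_Icc (hrs.trans hst)]
  exact mem_image_of_mem _ ⟨hrs, hst⟩

lemma IsPreconnected.mem_image_of_mem_image_convexHull {E : Type*} [AddCommGroup E]
    [Module ℝ E] [TopologicalSpace E] {A : Set E} (hA : IsPreconnected A) (f : E →L[ℝ] ℝ)
    {c : ℝ} (hc : c ∈ f '' convexHull ℝ A) : c ∈ f '' A := by
  rwa [← f.coe_coe, LinearMap.image_convexHull, f.coe_coe,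
    (hA.image f f.continuous.continuousOn).ordConnected.convex.convexHull_eq] at hc

lemma exists_eq_add_smul_of_cross_eq {x v z : Pt} (hv : v ≠ 0)
    (h : v 1 * (z 0 - x 0) = v 0 * (z 1 - x 1)) : ∃ t : ℝ, z = x + t • v := by
  have hv2 : v 0 ^ 2 + v 1 ^ 2 ≠ 0 := by
    have hnorm : ‖v‖ ^ 2 = v 0 ^ 2 + v 1 ^ 2 := by
      simp [EuclideanSpace.norm_sq_eq, Fin.sum_univ_two]
    exact hnorm ▸ pow_ne_zero 2 (norm_ne_zero_iff.2 hv)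
  refine ⟨((z 0 - x 0) * v 0 + (z 1 - x 1) * v 1) / (v 0 ^ 2 + v 1 ^ 2), ?_⟩
  ext j
  fin_cases j <;>
    simp only [Fin.zero_eta, Fin.mk_one, PiLp.add_apply, PiLp.smul_apply, smul_eq_mul] <;>
    field_simp
  · linear_combination (v 1) * h
  · linear_combination (-v 0) * h

lemma exists_add_smul_mem_of_add_smul_mem_convexHull {A : Set Pt} (hA : IsPreconnected A)
    {x v : Pt} (hv : v ≠ 0) {s : ℝ} (hs : x + s • v ∈ convexHull ℝ A) :
    ∃ t : ℝ, x + t • v ∈ A := by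
  let φ : Pt →L[ℝ] ℝ := v 1 • EuclideanSpace.proj 0 - v 0 • EuclideanSpace.proj 1
  have hφ (z : Pt) : φ z = v 1 * z 0 - v 0 * z 1 := by simp [φ]
  obtain ⟨z, hzA, hz⟩ := hA.mem_image_of_mem_image_convexHull φ ⟨_, hs, rfl⟩
  simp only [hφ, PiLp.add_apply, PiLp.smul_apply, smul_eq_mul] at hz
  obtain ⟨t, rfl⟩ := exists_eq_add_smul_of_cross_eq (x := x) (z := z) hv (by linear_combination hz)
  exact ⟨t, hzA⟩

namespace PlaneNetwork

lemma isClosed_locus (N : PlaneNetwork) : IsClosed N.locus :=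
  N.Edg.finite_toSet.isClosed_biUnion fun e _ => (isCompact_segment e.1 e.2).isClosed

lemma eventually_joinedIn_locus (N : PlaneNetwork) (p : Pt) :
    ∀ᶠ q in 𝓝 p, q ∈ N.locus → JoinedIn N.locus p q :=
  eventually_joinedIn_biUnion_segment N.Edg Prod.fst Prod.snd p

end PlaneNetwork

theorem stmt12_general (N : PlaneNetwork) (hnc : ¬IsPathConnected N.locus)
    (k : ℕ) (hk : 2 ≤ k) (C : Fin k → Set Pt)
    (hcomp : ∀ i, ∃ x ∈ N.locus, C i = pathComponentIn N.locus x)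
    (hcover : ⋃ i, C i = N.locus) :
    (∃ a b : Pt, a ∈ N.locus ∧ b ∈ N.locus ∧
        IsPathConnected (N.locus ∪ segment ℝ a b)) ↔
      ∃ x v : Pt, v ≠ 0 ∧ ∀ i, ∃ t : ℝ, x + t • v ∈ convexHull ℝ (C i) := by
  choose c hc hC using hcomp
  obtain rfl : C = fun i => pathComponentIn N.locus (c i) := funext hC
  constructor
  · rintro ⟨a, b, ha, -, hab⟩
    have hne : a ≠ b := by
      rintro rfl
      rw [segment_same, union_eq_left.2 (singleton_subset_iff.2 ha)] at hab
      exact hnc hab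
    refine ⟨a, b - a, sub_ne_zero.2 hne.symm, fun i => ?_⟩
    obtain ⟨z, hzC, hz⟩ := pathComponentIn_inter_nonempty_of_isPreconnected_union
      N.eventually_joinedIn_locus N.isClosed_locus hnc (isCompact_segment a b).isClosed
      hab.isConnected.isPreconnected (hc i)
    obtain ⟨t, -, rfl⟩ := (segment_eq_image' ℝ a b ▸ hz :)
    exact ⟨t, subset_convexHull ℝ _ hzC⟩
  · rintro ⟨x, v, hv, hline⟩
    have : Nonempty (Fin k) := ⟨⟨0, by omega⟩⟩
    choose s hs using hline
    choose t ht using fun i => exists_add_smul_mem_of_add_smul_mem_convexHull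
      (isPathConnected_pathComponentIn (hc i)).isConnected.isPreconnected hv (hs i)
    obtain ⟨i₀, hi₀⟩ := Finite.exists_min t
    obtain ⟨i₁, hi₁⟩ := Finite.exists_max t
    refine ⟨x + t i₀ • v, x + t i₁ • v, pathComponentIn_subset (ht i₀),
      pathComponentIn_subset (ht i₁), ?_⟩
    have hseg := (convex_segment (x + t i₀ • v) (x + t i₁ • v)).isPathConnected
      ⟨_, left_mem_segment ℝ _ _⟩
    rw [← hcover, union_comm]
    exact hseg.union_iUnion (fun i => isPathConnected_pathComponentIn (hc i))
      fun i => ⟨_, ht i, add_smul_mem_segment x v (hi₀ i) (hi₁ i)⟩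

/-- For a plane Euclidean network whose locus is not path-connected, with
path-connected components `C 0, …, C (k-1)` (`k ≥ 2`), there is a single segment with
endpoints on the locus whose insertion makes the locus path-connected iff there is a
straight line stabbing all the convex hulls of the components. -/
theorem stmt12 (N : PlaneNetwork) (hnc : ¬IsPathConnected N.locus)
    (k : ℕ) (hk : 2 ≤ k) (C : Fin k → Set Pt)
    (hcomp : ∀ i, ∃ x ∈ N.locus, C i = pathComponentIn N.locus x)
    (hinj : Function.Injective C)
    (hcover : ⋃ i, C i = N.locus) :
    (∃ a b : Pt, a ∈ N.locus ∧ b ∈ N.locus ∧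
        IsPathConnected (N.locus ∪ segment ℝ a b)) ↔
      ∃ x v : Pt, v ≠ 0 ∧ ∀ i, ∃ t : ℝ, x + t • v ∈ convexHull ℝ (C i) :=
  stmt12_general N hnc k hk C hcomp hcover
end
end
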